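/- arXiv:1611.05807 — 4 statements merged into one kernel-verified Lean document; each statement's English description precedes it below -/
import Mathlib

section
/- Let ε > 0, κ₀ > 0, κ₁ > 0, C ≥ 0, β > 0, N ∈ ℕ, and let κ: ℝ → ℂ be measurable with |κ(ω)| ≤ κ₁(1+|ω|)^N for all ω and Im κ(ω) ≥ κ₀|ω|^β − C for all ω. Then there exist constants B, b > 0 such that for every j ∈ ℕ₀, (1/j!) ∫_ℝ |κ(ω)|^j e^{−2ε Im κ(ω)} dω ≤ B b^j j^{(N/β − 1) j}. -/
/-!
Write `c = ε κ₀` and `t = |ω|`. The attenuation bound gives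
`exp (-2 ε Im κ ω) ≤ exp (2 ε C) * exp (-c t^β) ^ 2`. One factor `exp (-c t^β)` absorbs the
polynomial growth `‖κ ω‖^j ≤ κ₁^j (1 + t)^(N j)`, because `(1 + t)^n ≤ 2^n (1 + t^n)` and
`t^n exp (-c t^β) ≤ (n / (c β))^(n / β)` (maximize in `t`); the other factor is integrable, with
integral `2 c^(-1/β) Γ(1/β + 1)`. For `n = N j` the moment bound is `K^j j^(N j / β)`, and
`j^j ≤ e^j j!` turns `j^(N j / β) / j!` into `e^j j^((N / β - 1) j)`.
-/

open MeasureTheory Real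

lemma rpow_mul_exp_neg_mul_le {c ρ t : ℝ} (hc : 0 < c) (hρ : 0 ≤ ρ) (ht : 0 ≤ t) :
    t ^ ρ * exp (-c * t) ≤ (ρ / c) ^ ρ := by
  rcases hρ.eq_or_lt with rfl | hρ
  · simpa using mul_nonneg hc.le ht
  have hy : c * t / ρ * exp (-(c * t / ρ)) ≤ 1 :=
    (mul_exp_neg_le_exp_neg_one _).trans (exp_le_one_iff.mpr (by norm_num))
  calc t ^ ρ * exp (-c * t) = (t * exp (-(c * t / ρ))) ^ ρ := by
        rw [mul_rpow ht (exp_pos _).le, ← exp_mul]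
        congr 2
        field_simp
    _ = (ρ / c * (c * t / ρ * exp (-(c * t / ρ)))) ^ ρ := by
        congr 1
        field_simp
    _ ≤ (ρ / c) ^ ρ :=
        rpow_le_rpow (by positivity) (mul_le_of_le_one_right (by positivity) hy) hρ.le

lemma rpow_mul_exp_neg_mul_rpow_le {c β ρ t : ℝ} (hc : 0 < c) (hβ : 0 < β) (hρ : 0 ≤ ρ)
    (ht : 0 ≤ t) : t ^ ρ * exp (-c * t ^ β) ≤ (ρ / (c * β)) ^ (ρ / β) := by
  have h := rpow_mul_exp_neg_mul_le hc (div_nonneg hρ hβ.le) (rpow_nonneg ht β)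
  rwa [← rpow_mul ht, mul_div_cancel₀ _ hβ.ne', div_div, mul_comm β] at h

lemma one_add_pow_mul_exp_neg_mul_rpow_le {c β t : ℝ} (hc : 0 < c) (hβ : 0 < β) (ht : 0 ≤ t)
    (n : ℕ) : (1 + t) ^ n * exp (-c * t ^ β) ≤ 2 ^ n * (1 + (n / (c * β)) ^ (n / β : ℝ)) := by
  have hexp : exp (-c * t ^ β) ≤ 1 :=
    exp_le_one_iff.mpr (by nlinarith [mul_nonneg hc.le (rpow_nonneg ht β)])
  have hmoment := rpow_mul_exp_neg_mul_rpow_le hc hβ n.cast_nonneg ht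
  rw [rpow_natCast] at hmoment
  calc (1 + t) ^ n * exp (-c * t ^ β) ≤ 2 ^ n * (1 + t ^ n) * exp (-c * t ^ β) := by
        gcongr
        calc (1 + t) ^ n ≤ 2 ^ (n - 1) * (1 ^ n + t ^ n) := add_pow_le zero_le_one ht n
          _ ≤ 2 ^ n * (1 + t ^ n) := by
            rw [one_pow]; gcongr; exacts [one_le_two, n.sub_le 1]
    _ = 2 ^ n * (exp (-c * t ^ β) + t ^ n * exp (-c * t ^ β)) := by ring
    _ ≤ 2 ^ n * (1 + (n / (c * β)) ^ (n / β : ℝ)) := by gcongr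

lemma integral_exp_neg_mul_abs_rpow {b p : ℝ} (hp : 0 < p) (hb : 0 < b) :
    ∫ x : ℝ, exp (-b * |x| ^ p) = 2 * (b ^ (-1 / p) * Gamma (1 / p + 1)) := by
  rw [integral_comp_abs (f := fun x => exp (-b * x ^ p)), integral_exp_neg_mul_rpow hp hb]

lemma integral_exp_neg_mul_abs_rpow_pos {b p : ℝ} (hp : 0 < p) (hb : 0 < b) :
    0 < ∫ x : ℝ, exp (-b * |x| ^ p) := by
  rw [integral_exp_neg_mul_abs_rpow hp hb]
  have := Gamma_pos_of_pos (by positivity : 0 < 1 / p + 1)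
  positivity

lemma integrable_exp_neg_mul_abs_rpow {b p : ℝ} (hp : 0 < p) (hb : 0 < b) :
    Integrable fun x : ℝ => exp (-b * |x| ^ p) :=
  Integrable.of_integral_ne_zero (integral_exp_neg_mul_abs_rpow_pos hp hb).ne'

lemma one_le_natCast_rpow_mul {p : ℝ} (hp : 0 ≤ p) (j : ℕ) : 1 ≤ (j : ℝ) ^ (p * j) := by
  rcases j.eq_zero_or_pos with rfl | hj
  · simp
  · exact one_le_rpow (by exact_mod_cast hj) (by positivity)

lemma natCast_rpow_mul_le_exp_mul_factorial (p : ℝ) (j : ℕ) :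
    (j : ℝ) ^ (p * j) ≤ exp 1 ^ j * j.factorial * (j : ℝ) ^ ((p - 1) * j) := by
  rcases j.eq_zero_or_pos with rfl | hj
  · simp
  have hj' : (0 : ℝ) < j := by exact_mod_cast hj
  have hstirling : (j : ℝ) ^ j ≤ exp 1 ^ j * j.factorial := by
    have := pow_div_factorial_le_exp (j : ℝ) hj'.le j
    rw [← exp_nat_mul, mul_one]
    rwa [div_le_iff₀ (by positivity)] at this
  calc (j : ℝ) ^ (p * j) = (j : ℝ) ^ j * (j : ℝ) ^ ((p - 1) * j) := by
        rw [← rpow_natCast, ← rpow_add hj']; ring_nf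
    _ ≤ exp 1 ^ j * j.factorial * (j : ℝ) ^ ((p - 1) * j) := by gcongr

lemma one_add_pow_mul_natCast_rpow_le {K p : ℝ} (hK : 0 ≤ K) (hp : 0 ≤ p) (j : ℕ) :
    1 + K ^ j * (j : ℝ) ^ (p * j) ≤
      2 * ((1 + K) * exp 1) ^ j * j.factorial * (j : ℝ) ^ ((p - 1) * j) := by
  have hone := one_le_natCast_rpow_mul hp j
  have hKj : K ^ j ≤ (1 + K) ^ j := pow_le_pow_left₀ hK (by linarith) j
  have hone_le : (1 : ℝ) ≤ (1 + K) ^ j := one_le_pow₀ (by linarith)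
  calc 1 + K ^ j * (j : ℝ) ^ (p * j) ≤ 2 * (1 + K) ^ j * (j : ℝ) ^ (p * j) := by
        nlinarith
    _ ≤ 2 * (1 + K) ^ j * (exp 1 ^ j * j.factorial * (j : ℝ) ^ ((p - 1) * j)) := by
        gcongr; exact natCast_rpow_mul_le_exp_mul_factorial p j
    _ = 2 * ((1 + K) * exp 1) ^ j * j.factorial * (j : ℝ) ^ ((p - 1) * j) := by
        rw [mul_pow]; ring

lemma norm_pow_mul_exp_neg_im_le {z : ℂ} {ε κ₀ κ₁ C β t : ℝ} {N : ℕ} (hε : 0 ≤ ε)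
    (hz : ‖z‖ ≤ κ₁ * (1 + t) ^ N) (him : κ₀ * t ^ β - C ≤ z.im) (j : ℕ) :
    ‖z‖ ^ j * exp (-2 * ε * z.im) ≤
      exp (2 * ε * C) * κ₁ ^ j *
        ((1 + t) ^ (N * j) * exp (-(ε * κ₀) * t ^ β)) * exp (-(ε * κ₀) * t ^ β) := by
  have hpow : ‖z‖ ^ j ≤ κ₁ ^ j * (1 + t) ^ (N * j) := by
    rw [pow_mul, ← mul_pow]; exact pow_le_pow_left₀ (norm_nonneg z) hz j
  have hexp : exp (-2 * ε * z.im) ≤ exp (2 * ε * C) * exp (-(ε * κ₀) * t ^ β) ^ 2 := by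
    rw [← exp_nat_mul, ← exp_add, exp_le_exp]
    push_cast
    nlinarith
  calc ‖z‖ ^ j * exp (-2 * ε * z.im)
      ≤ κ₁ ^ j * (1 + t) ^ (N * j) * (exp (2 * ε * C) * exp (-(ε * κ₀) * t ^ β) ^ 2) :=
        mul_le_mul hpow hexp (exp_pos _).le ((pow_nonneg (norm_nonneg z) j).trans hpow)
    _ = _ := by ring

theorem frequency_integral_bound_general (ε κ₀ κ₁ C β : ℝ) (N : ℕ)
    (hε : 0 < ε) (hκ₀ : 0 < κ₀) (hκ₁ : 0 < κ₁) (hβ : 0 < β)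
    (κ : ℝ → ℂ)
    (hbound : ∀ ω : ℝ, ‖κ ω‖ ≤ κ₁ * (1 + |ω|) ^ N)
    (hatt : ∀ ω : ℝ, κ₀ * |ω| ^ β - C ≤ (κ ω).im) :
    ∃ B b : ℝ, 0 < B ∧ 0 < b ∧ ∀ j : ℕ,
      (1 / j.factorial : ℝ) *
          ∫ ω : ℝ, ‖κ ω‖ ^ j * Real.exp (-2 * ε * (κ ω).im) ≤
        B * b ^ j * (j : ℝ) ^ (((N : ℝ) / β - 1) * j) := by
  set c := ε * κ₀
  have hc : 0 < c := mul_pos hε hκ₀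
  set K := ((N : ℝ) / (c * β)) ^ ((N : ℝ) / β)
  have hK : 0 ≤ K := by positivity
  have hI := integral_exp_neg_mul_abs_rpow_pos hβ hc
  refine ⟨2 * exp (2 * ε * C) * ∫ ω : ℝ, exp (-c * |ω| ^ β), 2 ^ N * κ₁ * ((1 + K) * exp 1),
    by positivity, by positivity, fun j => ?_⟩
  have hmoment : ((N * j : ℕ) / (c * β) : ℝ) ^ ((N * j : ℕ) / β : ℝ) =
      K ^ j * (j : ℝ) ^ ((N : ℝ) / β * j) := by
    rw [← rpow_natCast, ← rpow_mul (by positivity), ← mul_rpow (by positivity) (by positivity)]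
    push_cast
    ring_nf
  have hpointwise (ω : ℝ) : ‖κ ω‖ ^ j * exp (-2 * ε * (κ ω).im) ≤
      exp (2 * ε * C) * κ₁ ^ j * (2 ^ (N * j) * (1 + K ^ j * (j : ℝ) ^ ((N : ℝ) / β * j))) *
        exp (-c * |ω| ^ β) := by
    refine (norm_pow_mul_exp_neg_im_le hε.le (hbound ω) (hatt ω) j).trans ?_
    rw [← hmoment]
    gcongr exp (2 * ε * C) * κ₁ ^ j * ?_ * exp (-c * |ω| ^ β)
    exact one_add_pow_mul_exp_neg_mul_rpow_le hc hβ (abs_nonneg ω) _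
  have hintegral := integral_mono_of_nonneg (ae_of_all _ fun ω => by positivity)
    ((integrable_exp_neg_mul_abs_rpow hβ hc).const_mul _) (ae_of_all _ hpointwise)
  rw [integral_const_mul] at hintegral
  rw [one_div_mul_eq_div, div_le_iff₀ (by positivity)]
  calc _ ≤ _ := hintegral
    _ ≤ exp (2 * ε * C) * κ₁ ^ j * (2 ^ (N * j) * (2 * ((1 + K) * exp 1) ^ j * j.factorial *
          (j : ℝ) ^ (((N : ℝ) / β - 1) * j))) * ∫ ω : ℝ, exp (-c * |ω| ^ β) := by
        gcongr
        exact one_add_pow_mul_natCast_rpow_le hK (by positivity) j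
    _ = _ := by simp only [pow_mul, mul_pow]; ring

theorem frequency_integral_bound (ε κ₀ κ₁ C β : ℝ) (N : ℕ)
    (hε : 0 < ε) (hκ₀ : 0 < κ₀) (hκ₁ : 0 < κ₁) (hC : 0 ≤ C) (hβ : 0 < β)
    (κ : ℝ → ℂ) (hmeas : Measurable κ)
    (hbound : ∀ ω : ℝ, ‖κ ω‖ ≤ κ₁ * (1 + |ω|) ^ N)
    (hatt : ∀ ω : ℝ, κ₀ * |ω| ^ β - C ≤ (κ ω).im) :
    ∃ B b : ℝ, 0 < B ∧ 0 < b ∧ ∀ j : ℕ,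
      (1 / j.factorial : ℝ) *
          ∫ ω : ℝ, ‖κ ω‖ ^ j * Real.exp (-2 * ε * (κ ω).im) ≤
        B * b ^ j * (j : ℝ) ^ (((N : ℝ) / β - 1) * j) :=
  frequency_integral_bound_general ε κ₀ κ₁ C β N hε hκ₀ hκ₁ hβ κ hbound hatt
end

section
/- Let γ: ℝ → ℂ be smooth, x ∈ ℝ^m, v a unit vector in ℝ^m, and define φ(s) = (1/2)|x+sv|². Then for every j ∈ ℕ₀, the j-th derivative of γ∘φ at 0 equals ∑_{k=0}^{⌊j/2⌋} [j! / (2^k k! (j−2k)!)] ⟨v,x⟩^{j−2k} γ^{(j−k)}((1/2)|x|²). -/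
open RealInnerProductSpace

noncomputable def Cc (j k : ℕ) : ℂ :=
  if 2 * k ≤ j then (j.factorial : ℂ) / (2 ^ k * k.factorial * (j - 2 * k).factorial) else 0

lemma Cc_zero (j : ℕ) : Cc j 0 = 1 := by
  simp [Cc, div_self, Nat.cast_ne_zero.2 (Nat.factorial_ne_zero j)]

lemma fact_rec (k n : ℕ) :
    (((n + 2*k + 2 + 1).factorial : ℂ)) / (2 ^ (k+1) * (k+1).factorial * (n+1).factorial)
      = ((n+2*k+2).factorial : ℂ) / (2 ^ (k+1) * (k+1).factorial * n.factorial)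
        + ((n + 2 : ℕ) : ℂ) * (((n+2*k+2).factorial : ℂ) / (2 ^ k * k.factorial * (n+2).factorial)) := by
  have e1 : (n.factorial : ℂ) ≠ 0 := Nat.cast_ne_zero.2 (Nat.factorial_ne_zero _)
  have e2 : (k.factorial : ℂ) ≠ 0 := Nat.cast_ne_zero.2 (Nat.factorial_ne_zero _)
  have e3 : ∀ i : ℕ, (2:ℂ) ^ i ≠ 0 := fun i => pow_ne_zero _ two_ne_zero
  have e4 : ((k:ℂ) + 1) ≠ 0 := Nat.cast_add_one_ne_zero k
  have e5 : ((n:ℂ) + 1) ≠ 0 := Nat.cast_add_one_ne_zero n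
  have e6 : ((n:ℂ) + 1 + 1) ≠ 0 := by
    have := Nat.cast_add_one_ne_zero (R := ℂ) (n+1); push_cast at this; exact this
  simp only [Nat.factorial_succ]
  push_cast
  rw [mul_div_assoc']
  rw [div_add_div _ _ (by exact mul_ne_zero (mul_ne_zero (e3 _) (mul_ne_zero e4 e2)) e1)
      (mul_ne_zero (mul_ne_zero (e3 _) e2) (mul_ne_zero e6 (mul_ne_zero e5 e1)))]
  rw [div_eq_div_iff (mul_ne_zero (mul_ne_zero (e3 _) (mul_ne_zero e4 e2)) (mul_ne_zero e5 e1))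
      (mul_ne_zero (mul_ne_zero (mul_ne_zero (e3 _) (mul_ne_zero e4 e2)) e1)
        (mul_ne_zero (mul_ne_zero (e3 _) e2) (mul_ne_zero e6 (mul_ne_zero e5 e1))))]
  ring

lemma Cc_rec (j k : ℕ) :
    Cc (j + 1) (k + 1) = Cc j (k + 1) + ((j - 2 * k : ℕ) : ℂ) * Cc j k := by
  unfold Cc
  rcases le_or_gt (2 * (k + 1)) j with h | h
  · obtain ⟨n, rfl⟩ : ∃ n, j = n + 2*k + 2 := ⟨j - 2*k - 2, by omega⟩
    rw [if_pos (by omega), if_pos (by omega), if_pos (by omega)]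
    have h2 : n + 2*k + 2 + 1 - 2 * (k + 1) = n + 1 := by omega
    have h3 : n + 2*k + 2 - 2 * (k + 1) = n := by omega
    have h1 : n + 2*k + 2 - 2*k = n + 2 := by omega
    rw [h2, h3, h1]
    exact fact_rec k n
  · rcases le_or_gt (2 * (k+1)) (j+1) with h' | h'
    · have hj : j = 2*k + 1 := by omega
      subst hj
      rw [if_pos h', if_neg (by omega), if_pos (by omega)]
      have h2 : 2*k + 1 + 1 - 2*(k+1) = 0 := by omega
      have h3 : 2*k + 1 - 2*k = 1 := by omega
      rw [h2, h3]
      simp only [Nat.factorial_succ]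
      have e2 : (k.factorial : ℂ) ≠ 0 := Nat.cast_ne_zero.2 (Nat.factorial_ne_zero _)
      have e3 : (2:ℂ) ^ k ≠ 0 := pow_ne_zero _ two_ne_zero
      have e4 : ((k:ℂ) + 1) ≠ 0 := Nat.cast_add_one_ne_zero k
      have e5 : ((2*k+1:ℕ).factorial : ℂ) ≠ 0 := Nat.cast_ne_zero.2 (Nat.factorial_ne_zero _)
      push_cast
      simp only [Nat.factorial_zero, Nat.cast_one, mul_one, one_mul, zero_add]
      rw [div_eq_div_iff (mul_ne_zero (pow_ne_zero _ two_ne_zero) (mul_ne_zero e4 e2))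
          (mul_ne_zero e3 e2), pow_succ]
      ring
    · rw [if_neg (by omega), if_neg (by omega)]
      rcases le_or_gt (2*k) j with h'' | h''
      · have : j - 2*k = 0 := by omega
        rw [this]; simp
      · rw [if_neg (by omega)]; simp

lemma Cc_of_lt {j k : ℕ} (h : j < 2*k) : Cc j k = 0 := by
  rw [Cc, if_neg (by omega)]

lemma sum_step (j : ℕ) (u : ℂ) (G : ℕ → ℂ) :
    ∑ k ∈ Finset.range (j+1+1), Cc (j+1) k * u^(j+1-2*k) * G (j+1-k)
      = ∑ k ∈ Finset.range (j+1),
          (Cc j k * ((j-2*k : ℕ) : ℂ) * u^(j-2*k-1) * G (j-k)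
            + Cc j k * u^(j+1-2*k) * G (j+1-k)) := by
  have hsplit : ∑ k ∈ Finset.range (j+1),
      (Cc j k * ((j-2*k : ℕ) : ℂ) * u^(j-2*k-1) * G (j-k)
        + Cc j k * u^(j+1-2*k) * G (j+1-k))
      = ∑ k ∈ Finset.range (j+1), Cc j k * ((j-2*k : ℕ) : ℂ) * u^(j-2*k-1) * G (j-k)
        + ∑ k ∈ Finset.range (j+1), Cc j k * u^(j+1-2*k) * G (j+1-k) :=
    Finset.sum_add_distrib
  rw [hsplit]
  have hB : ∑ k ∈ Finset.range (j+1+1), Cc j k * u^(j+1-2*k) * G (j+1-k)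
      = ∑ k ∈ Finset.range (j+1), Cc j k * u^(j+1-2*k) * G (j+1-k) := by
    rw [Finset.sum_range_succ, Cc_of_lt (show j < 2*(j+1) by omega), zero_mul, zero_mul, add_zero]
  rw [← hB]
  rw [Finset.sum_range_succ' (fun k => Cc (j+1) k * u^(j+1-2*k) * G (j+1-k)) (j+1),
      Finset.sum_range_succ' (fun k => Cc j k * u^(j+1-2*k) * G (j+1-k)) (j+1)]
  simp only [Cc_zero]
  rw [← add_assoc, ← Finset.sum_add_distrib]
  congr 1
  apply Finset.sum_congr rfl
  intro k hk
  have h1 : j + 1 - 2*(k+1) = j - 2*k - 1 := by omega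
  have h2 : j + 1 - (k+1) = j - k := by omega
  rw [Cc_rec, h1, h2]
  ring

lemma key (γ : ℝ → ℂ) (hγ : ContDiff ℝ (⊤ : ℕ∞) γ) (b c : ℝ) :
    ∀ (j : ℕ) (s : ℝ),
      iteratedDeriv j (fun t : ℝ => γ (c + b*t + t^2/2)) s
        = ∑ k ∈ Finset.range (j+1),
            Cc j k * ((b + s : ℝ) : ℂ)^(j - 2*k) * iteratedDeriv (j-k) γ (c + b*s + s^2/2) := by
  have hg : ∀ (n : ℕ) (y : ℝ), HasDerivAt (iteratedDeriv n γ) (iteratedDeriv (n+1) γ y) y := by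
    intro n y
    rw [iteratedDeriv_succ]
    exact ((hγ.differentiable_iteratedDeriv n (by exact_mod_cast ENat.coe_lt_top n)) y).hasDerivAt
  have hφ : ∀ y : ℝ, HasDerivAt (fun t : ℝ => c + b*t + t^2/2) (b + y) y := by
    intro y
    have h : HasDerivAt (fun t : ℝ => c + b*t + t^2/2) (b * 1 + ((2:ℕ):ℝ) * y^(2-1)/2) y := (((hasDerivAt_id y).const_mul b).const_add c).add ((hasDerivAt_pow 2 y).div_const 2)
    convert h using 1
    simp
  have hcomp : ∀ (n : ℕ) (y : ℝ),
      HasDerivAt (fun t : ℝ => iteratedDeriv n γ (c + b*t + t^2/2))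
        (((b + y : ℝ) : ℂ) * iteratedDeriv (n+1) γ (c + b*y + y^2/2)) y := by
    intro n y
    have := (hg n (c + b*y + y^2/2)).scomp y (hφ y)
    simpa [Function.comp_def, Complex.real_smul] using this
  have hpow : ∀ (n : ℕ) (y : ℝ),
      HasDerivAt (fun t : ℝ => ((b + t : ℝ) : ℂ)^n) ((n:ℂ) * ((b+y:ℝ):ℂ)^(n-1)) y := by
    intro n y
    have h1 : HasDerivAt (fun t : ℝ => ((b + t : ℝ) : ℂ)) 1 y :=
      HasDerivAt.ofReal_comp ((hasDerivAt_id y).const_add b)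
    simpa [Function.comp_def] using (hasDerivAt_pow n (((b+y : ℝ) : ℂ))).scomp y h1
  intro j
  induction j with
  | zero =>
    intro s
    simp [Cc]
  | succ j ih =>
    intro s
    rw [iteratedDeriv_succ]
    have hfun2 : iteratedDeriv j (fun t : ℝ => γ (c + b*t + t^2/2))
        = fun y : ℝ => ∑ k ∈ Finset.range (j+1),
            Cc j k * (((b + y : ℝ) : ℂ)^(j - 2*k) * iteratedDeriv (j-k) γ (c + b*y + y^2/2)) := by
      funext y
      rw [ih y]
      exact Finset.sum_congr rfl (fun k _ => by ring)
    rw [hfun2]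
    have hders : HasDerivAt (fun y : ℝ => ∑ k ∈ Finset.range (j+1),
        Cc j k * (((b + y : ℝ) : ℂ)^(j - 2*k) * iteratedDeriv (j-k) γ (c + b*y + y^2/2)))
        (∑ k ∈ Finset.range (j+1), Cc j k *
          (((j-2*k : ℕ):ℂ) * ((b+s:ℝ):ℂ)^(j-2*k-1) * iteratedDeriv (j-k) γ (c + b*s + s^2/2)
            + ((b+s:ℝ):ℂ)^(j-2*k) * (((b+s:ℝ):ℂ) * iteratedDeriv (j-k+1) γ (c + b*s + s^2/2)))) s :=
      HasDerivAt.fun_sum (fun k _ => ((hpow (j-2*k) s).mul (hcomp (j-k) s)).const_mul (Cc j k))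
    rw [hders.deriv]
    rw [sum_step j (((b+s:ℝ)):ℂ) (fun n => iteratedDeriv n γ (c + b*s + s^2/2))]
    apply Finset.sum_congr rfl
    intro k hk
    have hkj : k ≤ j := by simpa [Nat.lt_succ_iff] using hk
    have h2 : j - k + 1 = j + 1 - k := by omega
    rcases le_or_gt (2*k) j with h | h
    · have h3 : j + 1 - 2*k = (j - 2*k) + 1 := by omega
      rw [h2, h3, pow_succ]
      ring
    · rw [Cc_of_lt h]
      simp

theorem radial_composition_deriv {m : ℕ} (γ : ℝ → ℂ) (hγ : ContDiff ℝ (⊤ : ℕ∞) γ)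
    (x v : EuclideanSpace ℝ (Fin m)) (hv : ‖v‖ = 1) (j : ℕ) :
    iteratedDeriv j (fun s : ℝ => γ ((1 / 2) * ‖x + s • v‖ ^ 2)) 0 =
      ∑ k ∈ Finset.range (j / 2 + 1),
        ((j.factorial : ℂ) / (2 ^ k * k.factorial * (j - 2 * k).factorial)) *
          (⟪v, x⟫ : ℂ) ^ (j - 2 * k) * iteratedDeriv (j - k) γ ((1 / 2) * ‖x‖ ^ 2) := by
  set b : ℝ := ⟪v, x⟫ with hb
  set c : ℝ := (1/2) * ‖x‖^2 with hc
  have hfeq : (fun s : ℝ => γ ((1 / 2) * ‖x + s • v‖ ^ 2))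
      = (fun t : ℝ => γ (c + b*t + t^2/2)) := by
    funext s
    congr 1
    rw [norm_add_sq_real, real_inner_smul_right, norm_smul, real_inner_comm]
    simp [hv, hb, hc, abs_sq]
    ring
  rw [hfeq, key γ hγ b c j 0]
  have harg : c + b*0 + (0:ℝ)^2/2 = c := by ring
  have hbase : ((b + 0 : ℝ) : ℂ) = (b : ℂ) := by norm_num
  rw [harg, hbase]
  rw [← Finset.sum_subset (Finset.range_subset_range.2 (by omega : j/2 + 1 ≤ j + 1))
      (fun k _ hk2 => by
        rw [Cc_of_lt (by simp [Finset.mem_range] at hk2 ⊢; omega), zero_mul, zero_mul])]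
  apply Finset.sum_congr rfl
  intro k hk
  rw [Finset.mem_range] at hk
  rw [Cc, if_pos (by omega)]
end

section
/- For a ∈ ℂ define γ_a: (0,∞) → ℂ by γ_a(ρ) = e^{a√(2ρ)} / √(2ρ). Then for every j ∈ ℕ₀ and every ρ > 0, |γ_a^{(j)}(ρ)| ≤ 2^j (j+1)! (e^{j+1} + (1/j!)(ρ/2)^{j/2} |a|^j) |γ_a(ρ)| / ρ^j. -/
/-!
Writing `s = √(2r)`, one has `d/dr = s⁻¹ d/ds`, and induction on `j` gives
`γ_a^{(j)}(r) = e^{as} P_j(as) / s^{2j+1}` with `P_0 = 1` and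
`P_{j+1} = (X - (2j+1)) P_j + X P_j'`. The `k`-th coefficient of `P_{j+1}` is
`c_{k-1} + (k - 2j - 1) c_k` with `|k - 2j - 1| ≤ 2j + 1` on the support, so the weighted sums
`∑ |c_k| x^k` grow by at most a factor `x + 2j + 1` per step, whence `|P_j(y)| ≤ (|y| + 2j)^j`.
The stated bound then follows from `(x + 2j)^j ≤ 2^j (x^j + (2j)^j)` and `j^j ≤ j! e^j`.
-/

open Polynomial Finset

theorem iteratedDeriv_eqOn_of_hasDerivAt {𝕜 F : Type*} [NontriviallyNormedField 𝕜]
    [NormedAddCommGroup F] [NormedSpace 𝕜 F] {f : 𝕜 → F} {g : ℕ → 𝕜 → F} {U : Set 𝕜}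
    (hU : IsOpen U) (hf : Set.EqOn f (g 0) U)
    (hg : ∀ n, ∀ x ∈ U, HasDerivAt (g n) (g (n + 1) x) x) (n : ℕ) :
    Set.EqOn (iteratedDeriv n f) (g n) U := by
  induction n with
  | zero => simpa using hf
  | succ n ih =>
    intro x hx
    rw [iteratedDeriv_succ, (ih.eventuallyEq_of_mem (hU.mem_nhds hx)).deriv_eq, (hg n x hx).deriv]

noncomputable def coeffNormSum (p : ℂ[X]) (n : ℕ) (x : ℝ) : ℝ :=
  ∑ k ∈ range n, ‖p.coeff k‖ * x ^ k

theorem norm_eval_le_coeffNormSum {p : ℂ[X]} {n : ℕ} (hp : p.natDegree < n) (y : ℂ) :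
    ‖p.eval y‖ ≤ coeffNormSum p n ‖y‖ := by
  rw [eval_eq_sum_range' hp]
  refine (norm_sum_le _ _).trans_eq (sum_congr rfl fun k _ => ?_)
  rw [norm_mul, norm_pow]

theorem coeffNormSum_add_le (p q : ℂ[X]) (n : ℕ) {x : ℝ} (hx : 0 ≤ x) :
    coeffNormSum (p + q) n x ≤ coeffNormSum p n x + coeffNormSum q n x := by
  rw [coeffNormSum, coeffNormSum, coeffNormSum, ← sum_add_distrib]
  gcongr with k
  rw [coeff_add, ← add_mul]
  gcongr
  exact norm_add_le _ _

theorem coeffNormSum_X_mul (p : ℂ[X]) (n : ℕ) (x : ℝ) :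
    coeffNormSum (X * p) (n + 1) x = x * coeffNormSum p n x := by
  simp only [coeffNormSum, sum_range_succ', coeff_X_mul, coeff_X_mul_zero, norm_zero, zero_mul,
    add_zero, mul_sum, pow_succ]
  exact sum_congr rfl fun k _ => by ring

theorem coeffNormSum_succ_of_natDegree_lt {p : ℂ[X]} {n : ℕ} (hp : p.natDegree < n) (x : ℝ) :
    coeffNormSum p (n + 1) x = coeffNormSum p n x := by
  rw [coeffNormSum, sum_range_succ, coeff_eq_zero_of_natDegree_lt hp, norm_zero, zero_mul,
    add_zero, coeffNormSum]

theorem coeffNormSum_X_mul_derivative_sub_le (p : ℂ[X]) {m n : ℕ} (hn : n ≤ 2 * m + 1)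
    {x : ℝ} (hx : 0 ≤ x) :
    coeffNormSum (X * derivative p - C (m : ℂ) * p) n x ≤ m * coeffNormSum p n x := by
  have hcoeff (k : ℕ) : (X * derivative p - C (m : ℂ) * p).coeff k = ((k : ℂ) - m) * p.coeff k := by
    cases k with
    | zero => simp
    | succ k => simp only [coeff_sub, coeff_X_mul, coeff_derivative, coeff_C_mul]; push_cast; ring
  rw [coeffNormSum, coeffNormSum, mul_sum]
  refine sum_le_sum fun k hk => ?_
  have hkm : ‖(k : ℂ) - m‖ ≤ m := by
    rw [← Complex.ofReal_natCast, ← Complex.ofReal_natCast, ← Complex.ofReal_sub, Complex.norm_real,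
      Real.norm_eq_abs, abs_le]
    have hk2 : (k : ℝ) ≤ 2 * m := by exact_mod_cast (by have := mem_range.1 hk; omega : k ≤ 2 * m)
    constructor <;> linarith
  rw [hcoeff, norm_mul, ← mul_assoc]
  gcongr

noncomputable def gammaPoly : ℕ → ℂ[X]
  | 0 => 1
  | j + 1 =>
    X * gammaPoly j + (X * derivative (gammaPoly j) - C ((2 * j + 1 : ℕ) : ℂ) * gammaPoly j)

theorem natDegree_gammaPoly_le : ∀ j, (gammaPoly j).natDegree ≤ j
  | 0 => by simp [gammaPoly]
  | j + 1 => by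
    have ih := natDegree_gammaPoly_le j
    have hX : (X * gammaPoly j).natDegree ≤ j + 1 :=
      natDegree_mul_le.trans (by rw [natDegree_X]; omega)
    have hD : (X * derivative (gammaPoly j)).natDegree ≤ j + 1 :=
      natDegree_mul_le.trans <| by
        rw [natDegree_X]; have := natDegree_derivative_le (gammaPoly j); omega
    have hC : (C ((2 * j + 1 : ℕ) : ℂ) * gammaPoly j).natDegree ≤ j + 1 :=
      (natDegree_C_mul_le _ _).trans (by omega)
    exact natDegree_add_le_of_degree_le hX ((natDegree_sub_le_of_le hD hC).trans (max_self _).le)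

theorem coeffNormSum_gammaPoly_le {x : ℝ} (hx : 0 ≤ x) :
    ∀ j : ℕ, coeffNormSum (gammaPoly j) (j + 1) x ≤ (x + 2 * j) ^ j
  | 0 => by simp [coeffNormSum, gammaPoly]
  | j + 1 => by
    have hdeg : (gammaPoly j).natDegree < j + 1 := Nat.lt_succ_of_le (natDegree_gammaPoly_le j)
    calc coeffNormSum (gammaPoly (j + 1)) (j + 1 + 1) x
        ≤ x * coeffNormSum (gammaPoly j) (j + 1) x
          + (2 * j + 1 : ℕ) * coeffNormSum (gammaPoly j) (j + 1 + 1) x := by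
          rw [gammaPoly, ← coeffNormSum_X_mul]
          refine (coeffNormSum_add_le _ _ _ hx).trans (add_le_add le_rfl ?_)
          exact coeffNormSum_X_mul_derivative_sub_le _ (by omega) hx
      _ = (x + (2 * j + 1)) * coeffNormSum (gammaPoly j) (j + 1) x := by
          rw [coeffNormSum_succ_of_natDegree_lt hdeg]; push_cast; ring
      _ ≤ (x + (2 * j + 1)) * (x + 2 * j) ^ j := by
          gcongr; exact coeffNormSum_gammaPoly_le hx j
      _ ≤ (x + 2 * (j + 1 : ℕ)) ^ (j + 1) := by
          rw [pow_succ']; push_cast; gcongr <;> linarith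

noncomputable def gammaDeriv (a : ℂ) (j : ℕ) (z : ℂ) : ℂ :=
  Complex.exp (a * z) * (gammaPoly j).eval (a * z) / z ^ (2 * j + 1)

theorem hasDerivAt_gammaDeriv (a : ℂ) (j : ℕ) {z : ℂ} (hz : z ≠ 0) :
    HasDerivAt (gammaDeriv a j) (z * gammaDeriv a (j + 1) z) z := by
  have hlin : HasDerivAt (fun w => a * w) a z := by simpa using (hasDerivAt_id z).const_mul a
  have hpoly := ((gammaPoly j).hasDerivAt (a * z)).comp z hlin
  refine ((hlin.cexp.mul hpoly).div (hasDerivAt_pow (2 * j + 1) z)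
    (pow_ne_zero _ hz)).congr_deriv ?_
  simp only [gammaDeriv, gammaPoly, Pi.mul_apply, Function.comp_apply, eval_add, eval_sub,
    eval_mul, eval_X, eval_C, Nat.add_sub_cancel]
  field_simp
  push_cast
  ring

theorem hasDerivAt_gammaDeriv_sqrt (a : ℂ) (j : ℕ) {r : ℝ} (hr : 0 < r) :
    HasDerivAt (fun r : ℝ => gammaDeriv a j (Real.sqrt (2 * r)))
      (gammaDeriv a (j + 1) (Real.sqrt (2 * r))) r := by
  have hs : Real.sqrt (2 * r) ≠ 0 := (Real.sqrt_pos.2 (by linarith)).ne'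
  have hsqrt : HasDerivAt (fun r : ℝ => Real.sqrt (2 * r)) (Real.sqrt (2 * r))⁻¹ r := by
    convert ((hasDerivAt_id' r).const_mul 2).sqrt (by simpa using hr.ne') using 1
    field_simp
  refine ((hasDerivAt_gammaDeriv a j (Complex.ofReal_ne_zero.2 hs)).comp r
    hsqrt.ofReal_comp).congr_deriv ?_
  push_cast
  exact mul_div_cancel_left₀ _ (Complex.ofReal_ne_zero.2 hs)

theorem iteratedDeriv_gamma_eq (a : ℂ) (j : ℕ) {r : ℝ} (hr : 0 < r) :
    iteratedDeriv j (fun r : ℝ => Complex.exp (a * Real.sqrt (2 * r)) / Real.sqrt (2 * r)) r =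
      gammaDeriv a j (Real.sqrt (2 * r)) :=
  iteratedDeriv_eqOn_of_hasDerivAt (g := fun j r => gammaDeriv a j (Real.sqrt (2 * r))) isOpen_Ioi
    (fun r _ => by simp [gammaDeriv, gammaPoly]) (fun j _ hr => hasDerivAt_gammaDeriv_sqrt a j hr)
    j hr

theorem norm_gammaDeriv_le (a : ℂ) (j : ℕ) {s : ℝ} (hs : 0 < s) :
    ‖gammaDeriv a j s‖ ≤ (‖a‖ * s + 2 * j) ^ j * ‖Complex.exp (a * s)‖ / s ^ (2 * j + 1) := by
  have hpoly : ‖(gammaPoly j).eval (a * s)‖ ≤ (‖a‖ * s + 2 * j) ^ j := by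
    have hnorm : ‖a * s‖ = ‖a‖ * s := by rw [norm_mul, Complex.norm_real, Real.norm_of_nonneg hs.le]
    calc ‖(gammaPoly j).eval (a * s)‖
        ≤ coeffNormSum (gammaPoly j) (j + 1) ‖a * s‖ :=
          norm_eval_le_coeffNormSum (Nat.lt_succ_of_le (natDegree_gammaPoly_le j)) _
      _ ≤ (‖a‖ * s + 2 * j) ^ j := hnorm ▸ coeffNormSum_gammaPoly_le (by positivity) j
  rw [gammaDeriv, norm_div, norm_mul, norm_pow, Complex.norm_real, Real.norm_of_nonneg hs.le,
    mul_comm ‖Complex.exp _‖]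
  gcongr

open Nat in
theorem add_two_mul_pow_le {x : ℝ} (hx : 0 ≤ x) (j : ℕ) :
    (x + 2 * j) ^ j ≤ 2 ^ j * (j + 1)! * (2 ^ j * Real.exp (j + 1) + x ^ j / j !) := by
  have hjj : (j : ℝ) ^ j ≤ (j + 1)! * Real.exp (j + 1) := by
    have h := Real.pow_div_factorial_le_exp (x := (j : ℝ)) (by positivity) j
    rw [div_le_iff₀ (by positivity)] at h
    calc (j : ℝ) ^ j ≤ Real.exp j * j ! := h
      _ ≤ Real.exp (j + 1) * (j + 1)! := by gcongr <;> linarith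
      _ = _ := mul_comm _ _
  have hx' : x ^ j ≤ (j + 1) * x ^ j := le_mul_of_one_le_left (by positivity) (by linarith)
  calc (x + 2 * j) ^ j ≤ 2 ^ (j - 1) * (x ^ j + (2 * j) ^ j) := add_pow_le hx (by positivity) j
    _ ≤ 2 ^ j * ((j + 1) * x ^ j + 2 ^ j * ((j + 1)! * Real.exp (j + 1))) := by
        rw [mul_pow]
        gcongr
        · norm_num
        · omega
    _ = 2 ^ j * (j + 1)! * (2 ^ j * Real.exp (j + 1) + x ^ j / j !) := by
        rw [factorial_succ]
        push_cast
        field_simp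
        ring

theorem sqrt_two_mul_pow {ρ : ℝ} (hρ : 0 ≤ ρ) (j : ℕ) :
    Real.sqrt (2 * ρ) ^ j = 2 ^ j * (ρ / 2) ^ ((j : ℝ) / 2) := by
  rw [Real.rpow_div_two_eq_sqrt _ (by positivity), Real.rpow_natCast, ← mul_pow,
    show 2 * ρ = 2 ^ 2 * (ρ / 2) by ring, Real.sqrt_mul (by positivity), Real.sqrt_sq (by norm_num)]

theorem gamma_a_deriv_bound (a : ℂ) (j : ℕ) (ρ : ℝ) (hρ : 0 < ρ) :
    ‖iteratedDeriv j
        (fun r : ℝ => Complex.exp (a * Real.sqrt (2 * r)) / Real.sqrt (2 * r)) ρ‖ ≤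
      2 ^ j * (j + 1).factorial *
        (Real.exp (j + 1) + (1 / j.factorial) * (ρ / 2) ^ ((j : ℝ) / 2) * ‖a‖ ^ j) *
        ‖Complex.exp (a * Real.sqrt (2 * ρ)) / Real.sqrt (2 * ρ)‖ / ρ ^ j := by
  set s := Real.sqrt (2 * ρ) with hs_def
  have hs : 0 < s := Real.sqrt_pos.2 (by linarith)
  have hs_pow : s ^ (2 * j + 1) = 2 ^ j * ρ ^ j * s := by
    rw [pow_succ, pow_mul, Real.sq_sqrt (by linarith), mul_pow]
  rw [iteratedDeriv_gamma_eq a j hρ, norm_div, Complex.norm_real, Real.norm_of_nonneg hs.le]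
  calc ‖gammaDeriv a j s‖
      ≤ (‖a‖ * s + 2 * j) ^ j * ‖Complex.exp (a * s)‖ / s ^ (2 * j + 1) := norm_gammaDeriv_le a j hs
    _ ≤ 2 ^ j * (j + 1).factorial * (2 ^ j * Real.exp (j + 1) + (‖a‖ * s) ^ j / j.factorial)
          * ‖Complex.exp (a * s)‖ / s ^ (2 * j + 1) := by
        gcongr; exact add_two_mul_pow_le (by positivity) j
    _ = _ := by
        rw [hs_pow, mul_pow, hs_def, sqrt_two_mul_pow hρ.le]
        field_simp
end

section
/- For every τ > 0, the function κ̃(z) = z/√(1 − iτz) maps the closed upper half plane {z ∈ ℂ : Im z ≥ 0} into itself, and satisfies |κ̃(z)| ≤ |z| for all z with Im z ≥ 0. -/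
/-!
Put `s = (1 - iτz)^{1/2}`. Then `s² = 1 - iτz`, so `z = i(s² - 1)/τ` and `z/s = (i/τ)(s - s⁻¹)`.
For `Im z ≥ 0` we have `Re(1 - iτz) ≥ 1`, hence `|s| ≥ 1`, and the principal root has `Re s ≥ 0`.
Thus `Im(z/s) = Re(s - s⁻¹)/τ = Re s · (1 - |s|⁻²)/τ ≥ 0`, and `|z/s| = |z|/|s| ≤ |z|`.
-/

namespace Complex

theorem re_cpow_one_half_nonneg (w : ℂ) : 0 ≤ (w ^ (1 / 2 : ℂ)).re := by
  rcases eq_or_ne w 0 with rfl | hw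
  · simp
  have harg : (log w * (1 / 2)).im = arg w / 2 := by simp [log_im, div_eq_mul_inv]
  rw [cpow_def_of_ne_zero hw, exp_re, harg]
  have hcos : 0 ≤ Real.cos (arg w / 2) :=
    Real.cos_nonneg_of_mem_Icc
      ⟨by linarith [neg_pi_lt_arg w], by linarith [arg_le_pi w, Real.pi_pos]⟩
  positivity

theorem cpow_one_half_mul_self (w : ℂ) : w ^ (1 / 2 : ℂ) * w ^ (1 / 2 : ℂ) = w := by
  rw [← sq, one_div, cpow_ofNat_inv_pow]

theorem one_le_norm_cpow_one_half {w : ℂ} (hw : 1 ≤ ‖w‖) : 1 ≤ ‖w ^ (1 / 2 : ℂ)‖ := by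
  have hsq : ‖w ^ (1 / 2 : ℂ)‖ ^ 2 = ‖w‖ := by rw [sq, ← norm_mul, cpow_one_half_mul_self]
  exact (one_le_sq_iff₀ (norm_nonneg _)).mp (hsq ▸ hw)

theorem re_sub_inv_nonneg {s : ℂ} (hre : 0 ≤ s.re) (hs : 1 ≤ ‖s‖) : 0 ≤ (s - s⁻¹).re := by
  have hnormSq : 1 ≤ normSq s := by rw [normSq_eq_norm_sq]; nlinarith
  rw [sub_re, inv_re, sub_nonneg]
  exact div_le_self hre hnormSq

end Complex

open Complex in
theorem thermo_viscous_mapping (τ : ℝ) (hτ : 0 < τ) (z : ℂ) (hz : 0 ≤ z.im) :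
    0 ≤ (z / (1 - Complex.I * τ * z) ^ (1 / 2 : ℂ)).im ∧
      ‖z / (1 - Complex.I * τ * z) ^ (1 / 2 : ℂ)‖ ≤ ‖z‖ := by
  set s := (1 - I * τ * z) ^ (1 / 2 : ℂ) with hs_def
  have hre : 1 ≤ (1 - I * τ * z).re := by simpa using mul_nonneg hτ.le hz
  have hs : 1 ≤ ‖s‖ := one_le_norm_cpow_one_half (hre.trans (re_le_norm _))
  have hs0 : s ≠ 0 := norm_pos_iff.mp (one_pos.trans_le hs)
  have hτ0 : (τ : ℂ) ≠ 0 := ofReal_ne_zero.mpr hτ.ne'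
  have hquot : z / s = I / τ * (s - s⁻¹) := by
    have hz_eq : z = I * (s * s - 1) / τ := by
      rw [hs_def, cpow_one_half_mul_self]
      field_simp
      linear_combination τ * z * I_sq
    rw [hz_eq]
    field_simp
  refine ⟨?_, ?_⟩
  · rw [hquot, div_mul_eq_mul_div, div_ofReal_im, I_mul_im]
    exact div_nonneg (re_sub_inv_nonneg (re_cpow_one_half_nonneg _) hs) hτ.le
  · rw [norm_div]
    exact div_le_self (norm_nonneg z) hs
end
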